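/- If a quadratic irrational α has purely periodic continued fraction [ā₀, a₁, …, aₙ] (period a₀, a₁, …, aₙ repeated), then -1/α', where α' is the conjugate of α, has purely periodic continued fraction with the reversed period [āₙ, …, a₁, a₀]. -/

import Mathlib

/-- The sequence of complete quotients of the continued fraction algorithm. -/
noncomputable def cfX (x : ℝ) : ℕ → ℝ
  | 0 => x
  | n + 1 =>
    if cfX x n - ⌊cfX x n⌋ = 0 then 0 else 1 / (cfX x n - ⌊cfX x n⌋)

/-- The partial quotients (continued fraction expansion) of a real number. -/
noncomputable def cfA (x : ℝ) (n : ℕ) : ℤ := ⌊cfX x n⌋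

/-!
Let `x_k` be the complete quotients of `α`, `a_k` its partial quotients and `y_k` the conjugates
of the `x_k`, so that `y_{k+1} = 1 / (y_k - a_k)`. Periodicity of the expansion forces
`x_{n+1} = α`, hence `y_{n+1} = α'`, and `(y_k)` is periodic too. The `y_k` cannot all exceed
`a_k`, for then `α'` would have the same expansion as `α`; once some `y_k < a_k`, every later
`y_j`, and by periodicity every `y_j`, lies in `(-1, 0)`. Then `z_k = -1 / y_k > 1` satisfies
`z_{k+1} = a_k + 1 / z_k`, so reading `z_{n+1} = -1/α', z_n, …, z_0` is running the continued
fraction algorithm on `-1/α'` with partial quotients `a_n, …, a_0`.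
-/

open Function Set

lemma cfX_succ (x : ℝ) (k : ℕ) : cfX x (k + 1) = (cfX x k - cfA x k)⁻¹ := by
  rw [cfX, cfA]
  split_ifs with h <;> simp [h]

lemma cfX_add (x : ℝ) (k m : ℕ) : cfX x (k + m) = cfX (cfX x k) m := by
  induction m with
  | zero => rfl
  | succ m ih => rw [← add_assoc, cfX_succ, cfX_succ, cfA, cfA, ih]

lemma cfA_add (x : ℝ) (k m : ℕ) : cfA x (k + m) = cfA (cfX x k) m := by
  rw [cfA, cfA, cfX_add]

lemma irrational_cfX {x : ℝ} (hx : Irrational x) (k : ℕ) : Irrational (cfX x k) := by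
  induction k with
  | zero => exact hx
  | succ k ih => rw [cfX_succ]; exact (ih.sub_intCast _).inv

lemma one_lt_cfX_succ {x : ℝ} (hx : Irrational x) (k : ℕ) : 1 < cfX x (k + 1) := by
  have hfract : 0 < Int.fract (cfX x k) :=
    Int.fract_pos.2 ((irrational_cfX hx k).ne_int _)
  rw [cfX_succ, cfA, Int.self_sub_floor]
  exact (one_lt_inv₀ hfract).2 (Int.fract_lt_one _)

lemma one_le_cfA_succ {x : ℝ} (hx : Irrational x) (k : ℕ) : 1 ≤ cfA x (k + 1) :=
  Int.le_floor.2 (by exact_mod_cast (one_lt_cfX_succ hx k).le)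

lemma cfX_one (x : ℝ) : cfX x 1 = (Int.fract x)⁻¹ := by
  rw [cfX_succ, cfA, Int.self_sub_floor]
  rfl

lemma GenContFract.of_s_get?_eq_cfA {x : ℝ} (hx : Irrational x) (k : ℕ) :
    (GenContFract.of x).s.get? k = some ⟨1, cfA x (k + 1)⟩ := by
  induction k generalizing x with
  | zero => exact (of_s_head (Int.fract_pos.2 (hx.ne_int _)).ne').trans (by rw [cfA, cfX_one])
  | succ k ih => rw [of_s_succ, ← cfX_one, ih (irrational_cfX hx 1), ← cfA_add, add_comm]

lemma eq_of_cfA_eq {x y : ℝ} (hx : Irrational x) (hy : Irrational y)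
    (h : ∀ k, cfA x k = cfA y k) : x = y := by
  have hof : GenContFract.of x = GenContFract.of y := by
    have hh : (GenContFract.of x).h = (GenContFract.of y).h := by
      simp only [GenContFract.of_h_eq_floor]; exact_mod_cast h 0
    have hs : (GenContFract.of x).s = (GenContFract.of y).s := Stream'.Seq.ext fun k => by
      rw [GenContFract.of_s_get?_eq_cfA hx, GenContFract.of_s_get?_eq_cfA hy, h]
    cases hox : GenContFract.of x
    cases hoy : GenContFract.of y
    simp_all
  exact tendsto_nhds_unique (GenContFract.of_convergence x)
    (hof ▸ GenContFract.of_convergence y)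

lemma cfX_eq_self_of_periodic {x : ℝ} (hx : Irrational x) {N : ℕ} (h : Periodic (cfA x) N) :
    cfX x N = x :=
  eq_of_cfA_eq (irrational_cfX hx N) hx fun k => by rw [← cfA_add, add_comm, h]

lemma cfA_periodic_of_cfX_eq_self {x : ℝ} {N : ℕ} (h : cfX x N = x) : Periodic (cfA x) N :=
  fun k => by rw [add_comm, cfA_add, h]

lemma floor_intCast_add_inv {b : ℤ} {t : ℝ} (ht : 1 < t) : ⌊(b : ℝ) + t⁻¹⌋ = b := by
  rw [Int.floor_intCast_add, Int.floor_eq_zero_iff.2 ⟨(inv_pos.2 (by linarith)).le,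
    inv_lt_one_of_one_lt₀ ht⟩, add_zero]

section Recurrence

variable {x : ℝ} {w : ℕ → ℝ} {b : ℕ → ℤ} {N : ℕ}

lemma cfX_eq_of_recurrence (h0 : w 0 = x)
    (hrec : ∀ k < N, w k = b k + (w (k + 1))⁻¹ ∧ 1 < w (k + 1)) :
    ∀ k ≤ N, cfX x k = w k := by
  intro k hk
  induction k with
  | zero => exact h0.symm
  | succ k ih =>
    obtain ⟨hwk, hgt⟩ := hrec k hk
    rw [cfX_succ, cfA, ih (by omega), hwk, floor_intCast_add_inv hgt, add_sub_cancel_left,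
      inv_inv]

lemma cfA_eq_of_recurrence (h0 : w 0 = x)
    (hrec : ∀ k < N, w k = b k + (w (k + 1))⁻¹ ∧ 1 < w (k + 1)) :
    ∀ k < N, cfA x k = b k := by
  intro k hk
  rw [cfA, cfX_eq_of_recurrence h0 hrec k hk.le, (hrec k hk).1,
    floor_intCast_add_inv (hrec k hk).2]

end Recurrence

/-- For irrational `x`, this says that `y` is the conjugate of `x` over `ℚ`: `x` and `y` are the
two roots of `t ^ 2 - (x + y) t + x y ∈ ℚ[t]`. -/
def IsQuadConj (x y : ℝ) : Prop :=
  (∃ s : ℚ, x + y = s) ∧ ∃ p : ℚ, x * y = p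

namespace IsQuadConj

variable {x y z : ℝ}

lemma of_roots {A B C : ℤ} (hA : A ≠ 0) (hx : (A : ℝ) * x ^ 2 + B * x + C = 0)
    (hy : (A : ℝ) * y ^ 2 + B * y + C = 0) (hne : y ≠ x) : IsQuadConj x y := by
  have hA' : (A : ℝ) ≠ 0 := by exact_mod_cast hA
  have hsum : (A : ℝ) * (x + y) + B = 0 := by
    have hfac : (x - y) * ((A : ℝ) * (x + y) + B) = 0 := by linear_combination hx - hy
    exact (mul_eq_zero.1 hfac).resolve_left (sub_ne_zero.2 hne.symm)
  refine ⟨⟨-B / A, ?_⟩, ⟨C / A, ?_⟩⟩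
  · push_cast; field_simp; linear_combination hsum
  · push_cast; field_simp; linear_combination x * hsum - hx

lemma irrational (h : IsQuadConj x y) (hx : Irrational x) : Irrational y := by
  obtain ⟨⟨s, hs⟩, -⟩ := h
  rw [show y = s - x by linarith]
  exact hx.ratCast_sub s

lemma unique (hx : Irrational x) (hy : IsQuadConj x y) (hz : IsQuadConj x z) : y = z := by
  obtain ⟨⟨s, hs⟩, p, hp⟩ := hy
  obtain ⟨⟨s', hs'⟩, p', hp'⟩ := hz
  by_contra hyz
  have hss' : (s : ℝ) - s' ≠ 0 := by
    rw [← hs, ← hs']; exact fun h => hyz (by linarith)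
  refine hx ⟨(p - p') / (s - s'), ?_⟩
  push_cast
  field_simp
  linear_combination hp' - hp + x * (hs - hs')

lemma inv_sub_intCast (h : IsQuadConj x y) (hx : Irrational x) (a : ℤ) :
    IsQuadConj (x - a)⁻¹ (y - a)⁻¹ := by
  have hxa : x - a ≠ 0 := sub_ne_zero.2 (hx.ne_int a)
  have hya : y - a ≠ 0 := sub_ne_zero.2 ((h.irrational hx).ne_int a)
  obtain ⟨⟨s, hs⟩, p, hp⟩ := h
  have hd : (x - a) * (y - a) = ((p - a * s + a ^ 2 : ℚ) : ℝ) := by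
    push_cast; linear_combination hp - a * hs
  refine ⟨⟨(s - 2 * a) / (p - a * s + a ^ 2), ?_⟩, ⟨1 / (p - a * s + a ^ 2), ?_⟩⟩
  · rw [Rat.cast_div, ← hd]; push_cast; field_simp; linear_combination hs
  · rw [Rat.cast_div, ← hd]; push_cast; field_simp

end IsQuadConj

/-- The conjugate of the continued fraction step `x_{k+1} = 1 / (x_k - a_k)`. -/
noncomputable def conjQuot (y : ℝ) (a : ℕ → ℤ) : ℕ → ℝ
  | 0 => y
  | k + 1 => (conjQuot y a k - a k)⁻¹

section ConjQuot

variable {y : ℝ} {a : ℕ → ℤ}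

lemma conjQuot_zero : conjQuot y a 0 = y := rfl

lemma conjQuot_succ (k : ℕ) : conjQuot y a (k + 1) = (conjQuot y a k - a k)⁻¹ := rfl

lemma conjQuot_add (k m : ℕ) :
    conjQuot y a (k + m) = conjQuot (conjQuot y a k) (fun i => a (k + i)) m := by
  induction m with
  | zero => rfl
  | succ m ih => rw [← add_assoc, conjQuot_succ, conjQuot_succ, ih]

lemma conjQuot_periodic {N : ℕ} (ha : Periodic a N) (hN : conjQuot y a N = y) :
    Periodic (conjQuot y a) N := fun k => by
  rw [add_comm, conjQuot_add, hN]
  congr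
  funext i
  rw [add_comm, ha]

lemma irrational_conjQuot (hy : Irrational y) (k : ℕ) : Irrational (conjQuot y a k) := by
  induction k with
  | zero => exact hy
  | succ k ih => exact (ih.sub_intCast _).inv

lemma neg_inv_conjQuot_succ (k : ℕ) :
    -(conjQuot y a (k + 1))⁻¹ = a k + (-(conjQuot y a k)⁻¹)⁻¹ := by
  rw [conjQuot_succ, inv_inv, inv_neg, inv_inv]
  ring

lemma conjQuot_mem_Ioo {N : ℕ} (hN : 0 < N) (ha : ∀ k, 1 ≤ a k)
    (hper : Periodic (conjQuot y a) N) (hlt : ∃ k, conjQuot y a k < a k) :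
    ∀ k, conjQuot y a k ∈ Ioo (-1) 0 := by
  have hnext : ∀ k, conjQuot y a k < a k → conjQuot y a (k + 1) < 0 := fun k h =>
    inv_lt_zero.2 (sub_neg.2 h)
  have ha' : ∀ k, (1 : ℝ) ≤ a k := fun k => by exact_mod_cast ha k
  obtain ⟨k₀, hk₀⟩ := hlt
  have htail : ∀ j, conjQuot y a (k₀ + 1 + j) < 0 := by
    intro j
    induction j with
    | zero => exact hnext k₀ hk₀
    | succ j ih => exact hnext (k₀ + 1 + j) (by linarith [ha' (k₀ + 1 + j)])
  have hneg : ∀ k, conjQuot y a k < 0 := fun k => by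
    rw [← hper.nat_mul (k₀ + 1) k]
    have hle : k₀ + 1 ≤ (k₀ + 1) * N := Nat.le_mul_of_pos_right _ hN
    obtain ⟨j, hj⟩ : ∃ j, k + (k₀ + 1) * N = k₀ + 1 + j :=
      ⟨k + (k₀ + 1) * N - (k₀ + 1), by omega⟩
    exact_mod_cast hj ▸ htail j
  intro k
  obtain ⟨m, hm⟩ : ∃ m, k + N = m + 1 := ⟨k + N - 1, by omega⟩
  refine ⟨?_, hneg k⟩
  have hden : conjQuot y a m - a m < -1 := by linarith [hneg m, ha' m]
  rw [← hper k, hm, conjQuot_succ, ← neg_neg (conjQuot y a m - a m), inv_neg, neg_lt_neg_iff]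
  exact inv_lt_one_of_one_lt₀ (by linarith)

end ConjQuot

lemma isQuadConj_conjQuot {x y : ℝ} (hx : Irrational x) (h : IsQuadConj x y) (k : ℕ) :
    IsQuadConj (cfX x k) (conjQuot y (cfA x) k) := by
  induction k with
  | zero => exact h
  | succ k ih => rw [cfX_succ, conjQuot_succ]; exact ih.inv_sub_intCast (irrational_cfX hx k) _

lemma exists_conjQuot_lt_cfA {x y : ℝ} (hx : Irrational x) (hy : Irrational y) (hne : y ≠ x) :
    ∃ k, conjQuot y (cfA x) k < cfA x k := by
  by_contra! hge
  have hgt : ∀ k, (cfA x k : ℝ) < conjQuot y (cfA x) k := fun k =>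
    (hge k).lt_of_ne ((irrational_conjQuot hy k).ne_int _).symm
  -- otherwise `y` would have the same partial quotients as `x`
  have hrec : ∀ k, conjQuot y (cfA x) k = cfA x k + (conjQuot y (cfA x) (k + 1))⁻¹ ∧
      1 < conjQuot y (cfA x) (k + 1) := fun k =>
    ⟨by rw [conjQuot_succ, inv_inv]; ring,
      lt_of_le_of_lt (by exact_mod_cast one_le_cfA_succ hx k) (hgt (k + 1))⟩
  exact hne <| eq_of_cfA_eq hy hx fun k =>
    cfA_eq_of_recurrence (N := k + 1) conjQuot_zero (fun j _ => hrec j) k k.lt_succ_self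

/-- If a quadratic irrational `α` has purely periodic continued fraction with period
`a 0, a 1, …, a n`, then `-1/α'` has purely periodic continued fraction with the
reversed period `a n, …, a 1, a 0`. -/
theorem neg_inv_conj_reversed_period (α α' : ℝ) (hα : Irrational α)
    (A B C : ℤ) (hA : A ≠ 0)
    (hroot : (A : ℝ) * α ^ 2 + (B : ℝ) * α + (C : ℝ) = 0)
    (hroot' : (A : ℝ) * α' ^ 2 + (B : ℝ) * α' + (C : ℝ) = 0)
    (hne : α' ≠ α)
    (n : ℕ) (a : ℕ → ℤ)
    (hvals : ∀ i : ℕ, i ≤ n → cfA α i = a i)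
    (hper : ∀ m : ℕ, cfA α (m + (n + 1)) = cfA α m) :
    (∀ i : ℕ, i ≤ n → cfA (-1 / α') i = a (n - i)) ∧
      (∀ m : ℕ, cfA (-1 / α') (m + (n + 1)) = cfA (-1 / α') m) := by
  have hconj : IsQuadConj α α' := .of_roots hA hroot hroot' hne
  have hα' : Irrational α' := hconj.irrational hα
  have hcfA : ∀ k, 1 ≤ cfA α k := fun k => hper k ▸ one_le_cfA_succ hα (k + n)
  set y := conjQuot α' (cfA α)
  have hy : y (n + 1) = α' := by
    refine IsQuadConj.unique hα ?_ hconj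
    simpa only [cfX_eq_self_of_periodic hα hper] using isQuadConj_conjQuot hα hconj (n + 1)
  have hy_mem : ∀ k, y k ∈ Ioo (-1) 0 := conjQuot_mem_Ioo n.succ_pos hcfA
    (conjQuot_periodic hper hy) (exists_conjQuot_lt_cfA hα hα' hne)
  -- the complete quotients of `-1 / α'` are `-1 / y (n + 1 - k)` for `k ≤ n + 1`
  set w : ℕ → ℝ := fun k => -(y (n + 1 - k))⁻¹
  have hw0 : w 0 = -1 / α' := by simp only [w, Nat.sub_zero, hy, neg_div, one_div]
  have hrec : ∀ k < n + 1, w k = cfA α (n - k) + (w (k + 1))⁻¹ ∧ 1 < w (k + 1) := by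
    intro k hk
    simp only [w, show n + 1 - k = n - k + 1 by omega, Nat.add_sub_add_right]
    refine ⟨neg_inv_conjQuot_succ _, ?_⟩
    rw [← inv_neg]
    exact (one_lt_inv₀ (neg_pos.2 (hy_mem _).2)).2 (by linarith [(hy_mem (n - k)).1])
  refine ⟨fun i hi => ?_, cfA_periodic_of_cfX_eq_self ?_⟩
  · rw [cfA_eq_of_recurrence hw0 hrec i (by omega), hvals _ (Nat.sub_le n i)]
  · rw [cfX_eq_of_recurrence hw0 hrec _ le_rfl]
    simp only [w, Nat.sub_self, y, conjQuot_zero, neg_div, one_div]
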